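/- Let p ∈ (0,1), |ψ⟩ = √p|0⟩ + √(1−p)|1⟩, ρ₀ = ½I the maximally mixed qubit state, and ρ₁ = |ψ⟩⟨ψ|. Then for any ε ∈ (0,1) and all n ≥ ⌈log₂(1/ε)⌉ + 1, inf{ Tr(Z[ρ₁^{⊗n}] E) : E Hermitian on (ℂ²)^{⊗n}, 0 ≤ E ≤ I, Tr(Z[ρ₀^{⊗n}] E) ≥ 1−ε } = 0. -/

import Mathlib

open Matrix Complex Set Filter

noncomputable section

/-- Number of 1s in a bit string. -/
def ones {n : ℕ} (x : Fin n → Fin 2) : ℕ := (Finset.univ.filter fun i => x i = 1).card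

/-- The `n`-fold tensor power of a one-qubit operator, as a matrix indexed by bit strings. -/
def mpow (n : ℕ) (ρ : Matrix (Fin 2) (Fin 2) ℂ) :
    Matrix (Fin n → Fin 2) (Fin n → Fin 2) ℂ :=
  Matrix.of fun x y => ∏ i, ρ (x i) (y i)

/-- The parity operator ω = σ_z^{⊗n}: it multiplies a computational basis vector by
(-1)^(number of 1s). -/
def parityOp (n : ℕ) : Matrix (Fin n → Fin 2) (Fin n → Fin 2) ℂ :=
  Matrix.diagonal fun x => (-1 : ℂ) ^ ones x

/-- The ℤ₂-twirling Z[X] = ½ (X + ωXω). -/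
def twirl {n : ℕ} (X : Matrix (Fin n → Fin 2) (Fin n → Fin 2) ℂ) :
    Matrix (Fin n → Fin 2) (Fin n → Fin 2) ℂ :=
  (2 : ℂ)⁻¹ • (X + parityOp n * X * parityOp n)

/-- Rank-one projection |ψ⟩⟨ψ| on one qubit. -/
def projv (ψ : Fin 2 → ℂ) : Matrix (Fin 2) (Fin 2) ℂ := vecMulVec ψ (star ψ)

/-- Rank-one projection |ψ⟩⟨ψ| on n qubits. -/
def projN {n : ℕ} (ψ : (Fin n → Fin 2) → ℂ) :
    Matrix (Fin n → Fin 2) (Fin n → Fin 2) ℂ := vecMulVec ψ (star ψ)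

def ket0 : Fin 2 → ℂ := ![1, 0]

def ket1 : Fin 2 → ℂ := ![0, 1]

/-- The qubit state √p |0⟩ + e^{iφ} √(1-p) |1⟩. -/
def qubit (p φ : ℝ) : Fin 2 → ℂ :=
  ![(Real.sqrt p : ℂ), Complex.exp (Complex.I * φ) * (Real.sqrt (1 - p) : ℂ)]

/-- The qubit state √p |0⟩ + √(1-p) |1⟩. -/
def qubitR (p : ℝ) : Fin 2 → ℂ := ![(Real.sqrt p : ℂ), (Real.sqrt (1 - p) : ℂ)]

open scoped ComplexOrder

/-- The set of type-II error probabilities Tr(σ₁ E) over POVM elements 0 ≤ E ≤ I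
(Loewner order) whose type-I error is at most ε, i.e. Tr(σ₀ E) ≥ 1-ε. -/
def errSet (n : ℕ) (σ0 σ1 : Matrix (Fin n → Fin 2) (Fin n → Fin 2) ℂ) (ε : ℝ) : Set ℝ :=
  { x | ∃ E : Matrix (Fin n → Fin 2) (Fin n → Fin 2) ℂ,
      E.IsHermitian ∧ E.PosSemidef ∧ (1 - E).PosSemidef ∧
      1 - ε ≤ ((σ0 * E).trace).re ∧ x = ((σ1 * E).trace).re }

/-- The maximally mixed qubit state ½ I. -/
def mmix : Matrix (Fin 2) (Fin 2) ℂ := (2 : ℂ)⁻¹ • 1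

/-!
Twirling a pure state `|Ψ⟩⟨Ψ|` keeps exactly the matrix entries between bit strings of equal
parity, so it equals `|Ψₑ⟩⟨Ψₑ| + |Ψₒ⟩⟨Ψₒ|`, where `Ψₑ` and `Ψₒ` are the restrictions of `Ψ` to
strings of even and odd weight; they are orthogonal since their supports are disjoint. The test
`E = 1 - P`, with `P` the projection onto `span {Ψₑ, Ψₒ}`, therefore has type-II error `0`, while
the twirled null hypothesis is `2⁻ⁿ • 1`, so its type-I error is `Tr P / 2ⁿ ≤ 2 / 2ⁿ ≤ ε`.
-/

namespace Matrix

variable {𝕜 ι : Type*} [RCLike 𝕜] [Fintype ι]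

/-- For `a = 0` the factor `(star a ⬝ᵥ a)⁻¹` is `0`, so `lineProj 0 = 0`: no case split on whether
`Ψₑ` or `Ψₒ` vanishes is needed. -/
def lineProj (a : ι → 𝕜) : Matrix ι ι 𝕜 := (star a ⬝ᵥ a)⁻¹ • vecMulVec a (star a)

lemma isHermitian_lineProj (a : ι → 𝕜) : (lineProj a).IsHermitian := by
  rw [IsHermitian, lineProj, conjTranspose_smul, star_inv₀, ← star_dotProduct,
    (posSemidef_vecMulVec_self_star a).isHermitian.eq]

lemma lineProj_mulVec (a b : ι → 𝕜) :
    lineProj a *ᵥ b = ((star a ⬝ᵥ a)⁻¹ * (star a ⬝ᵥ b)) • a := by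
  rw [lineProj, smul_mulVec, vecMulVec_mulVec, op_smul_eq_smul, smul_smul]

lemma lineProj_mulVec_self (a : ι → 𝕜) : lineProj a *ᵥ a = a := by
  rcases eq_or_ne a 0 with rfl | ha
  · simp
  · rw [lineProj_mulVec, inv_mul_cancel₀ (dotProduct_star_self_eq_zero.not.mpr ha), one_smul]

lemma lineProj_mulVec_of_orthogonal {a b : ι → 𝕜} (h : star a ⬝ᵥ b = 0) :
    lineProj a *ᵥ b = 0 := by
  rw [lineProj_mulVec, h, mul_zero, zero_smul]

lemma lineProj_mul_lineProj (a b : ι → 𝕜) :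
    lineProj a * lineProj b = (star b ⬝ᵥ b)⁻¹ • vecMulVec (lineProj a *ᵥ b) (star b) := by
  nth_rw 2 [lineProj]
  rw [Matrix.mul_smul, mul_vecMulVec]

lemma lineProj_mul_lineProj_of_orthogonal {a b : ι → 𝕜} (h : star a ⬝ᵥ b = 0) :
    lineProj a * lineProj b = 0 := by
  rw [lineProj_mul_lineProj, lineProj_mulVec_of_orthogonal h, zero_vecMulVec, smul_zero]

open scoped MatrixOrder in
lemma _root_.IsStarProjection.posSemidef {P : Matrix ι ι 𝕜} (hP : IsStarProjection P) :
    P.PosSemidef :=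
  nonneg_iff_posSemidef.mp hP.nonneg

lemma isStarProjection_lineProj (a : ι → 𝕜) : IsStarProjection (lineProj a) := by
  refine ⟨?_, isHermitian_lineProj a⟩
  rw [IsIdempotentElem, lineProj_mul_lineProj, lineProj_mulVec_self, lineProj]

lemma isStarProjection_lineProj_add {a b : ι → 𝕜} (h : star a ⬝ᵥ b = 0) :
    IsStarProjection (lineProj a + lineProj b) :=
  (isStarProjection_lineProj a).add (isStarProjection_lineProj b)
    (lineProj_mul_lineProj_of_orthogonal h)

lemma lineProj_add_mulVec_left {a b : ι → 𝕜} (h : star b ⬝ᵥ a = 0) :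
    (lineProj a + lineProj b) *ᵥ a = a := by
  rw [add_mulVec, lineProj_mulVec_self, lineProj_mulVec_of_orthogonal h, add_zero]

lemma trace_lineProj [DecidableEq ι] (a : ι → 𝕜) :
    trace (lineProj a) = if a = 0 then 0 else 1 := by
  split_ifs with ha
  · simp [ha, lineProj]
  · rw [lineProj, trace_smul, trace_vecMulVec, dotProduct_comm a, smul_eq_mul,
      inv_mul_cancel₀ (dotProduct_star_self_eq_zero.not.mpr ha)]

lemma trace_vecMulVec_star_mul (a : ι → 𝕜) (F : Matrix ι ι 𝕜) :
    trace (vecMulVec a (star a) * F) = star a ⬝ᵥ (F *ᵥ a) := by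
  rw [vecMulVec_mul, trace_vecMulVec, dotProduct_comm, ← dotProduct_mulVec]

variable [DecidableEq ι]

lemma one_sub_lineProj_add_mulVec_left {a b : ι → 𝕜} (h : star b ⬝ᵥ a = 0) :
    (1 - (lineProj a + lineProj b)) *ᵥ a = 0 := by
  rw [sub_mulVec, one_mulVec, lineProj_add_mulVec_left h, sub_self]

lemma one_sub_lineProj_add_mulVec_right {a b : ι → 𝕜} (h : star a ⬝ᵥ b = 0) :
    (1 - (lineProj a + lineProj b)) *ᵥ b = 0 := by
  rw [add_comm, one_sub_lineProj_add_mulVec_left h]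

lemma card_sub_two_le_re_trace_one_sub_lineProj_add (a b : ι → 𝕜) :
    (Fintype.card ι : ℝ) - 2 ≤ RCLike.re (trace (1 - (lineProj a + lineProj b))) := by
  rw [trace_sub, trace_add, trace_one, trace_lineProj, trace_lineProj]
  split_ifs <;> simp <;> linarith

end Matrix

lemma star_indicator_dotProduct_indicator_compl {𝕜 ι : Type*} [RCLike 𝕜] [Fintype ι]
    (s : Set ι) (v : ι → 𝕜) : star (s.indicator v) ⬝ᵥ sᶜ.indicator v = 0 :=
  Finset.sum_eq_zero fun x _ => by by_cases hx : x ∈ s <;> simp [hx]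

def evenWeight (n : ℕ) : Set (Fin n → Fin 2) := {x | Even (ones x)}

lemma twirl_apply {n : ℕ} (X : Matrix (Fin n → Fin 2) (Fin n → Fin 2) ℂ) (x y : Fin n → Fin 2) :
    twirl X x y = if (Even (ones x) ↔ Even (ones y)) then X x y else 0 := by
  simp only [twirl, parityOp, mul_diagonal, diagonal_mul, Matrix.smul_apply, Matrix.add_apply,
    smul_eq_mul]
  by_cases hx : Even (ones x) <;> by_cases hy : Even (ones y) <;>
    simp [hx, hy, neg_one_pow_eq_ite] <;> ring

lemma twirl_vecMulVec_star {n : ℕ} (Ψ : (Fin n → Fin 2) → ℂ) :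
    twirl (vecMulVec Ψ (star Ψ)) =
      vecMulVec ((evenWeight n).indicator Ψ) (star ((evenWeight n).indicator Ψ)) +
        vecMulVec ((evenWeight n)ᶜ.indicator Ψ) (star ((evenWeight n)ᶜ.indicator Ψ)) := by
  ext x y
  rw [twirl_apply]
  by_cases hx : Even (ones x) <;> by_cases hy : Even (ones y) <;>
    simp [evenWeight, Set.indicator, vecMulVec_apply, hx, hy]

lemma twirl_smul_one {n : ℕ} (c : ℂ) : twirl (c • 1 : Matrix (Fin n → Fin 2) _ ℂ) = c • 1 := by
  ext x y
  rw [twirl_apply]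
  by_cases hxy : x = y <;> simp [hxy]

lemma mpow_smul_one {n : ℕ} (c : ℂ) : mpow n (c • 1) = c ^ n • 1 := by
  ext x y
  by_cases hxy : x = y
  · simp [mpow, hxy]
  · obtain ⟨i, hi⟩ := Function.ne_iff.mp hxy
    simp [mpow, hxy, Finset.prod_eq_zero (Finset.mem_univ i), hi]

lemma mpow_projv {n : ℕ} (ψ : Fin 2 → ℂ) :
    mpow n (projv ψ) = vecMulVec (fun x => ∏ i, ψ (x i)) (star fun x => ∏ i, ψ (x i)) := by
  ext x y
  simp [mpow, projv, vecMulVec_apply, star_prod, Finset.prod_mul_distrib]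

lemma two_div_two_pow_le {ε : ℝ} (hε : 0 < ε) {n : ℕ} (hn : ⌈Real.logb 2 (1 / ε)⌉₊ + 1 ≤ n) :
    2 / 2 ^ n ≤ ε := by
  have hlog : Real.logb 2 (1 / ε) ≤ (n - 1 : ℕ) :=
    (Nat.le_ceil _).trans (by exact_mod_cast Nat.le_sub_one_of_lt hn)
  rw [Real.logb_le_iff_le_rpow one_lt_two (by positivity), Real.rpow_natCast] at hlog
  obtain ⟨m, rfl⟩ : ∃ m, n = m + 1 := ⟨n - 1, by omega⟩
  rw [Nat.add_sub_cancel, one_div_le hε (by positivity)] at hlog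
  rwa [pow_succ, div_mul_cancel_right₀ two_ne_zero, ← one_div]

lemma nonneg_of_mem_errSet {n : ℕ} {σ0 : Matrix (Fin n → Fin 2) (Fin n → Fin 2) ℂ}
    {a b : (Fin n → Fin 2) → ℂ} {ε x : ℝ}
    (hx : x ∈ errSet n σ0 (vecMulVec a (star a) + vecMulVec b (star b)) ε) : 0 ≤ x := by
  obtain ⟨F, -, hF, -, -, rfl⟩ := hx
  rw [add_mul, trace_add, trace_vecMulVec_star_mul, trace_vecMulVec_star_mul, Complex.add_re]
  exact add_nonneg (hF.re_dotProduct_nonneg a) (hF.re_dotProduct_nonneg b)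

lemma zero_mem_errSet {n : ℕ} {a b : (Fin n → Fin 2) → ℂ} (hab : star a ⬝ᵥ b = 0) {ε : ℝ}
    (hε : 2 / 2 ^ n ≤ ε) :
    0 ∈ errSet n ((2 : ℂ)⁻¹ ^ n • 1) (vecMulVec a (star a) + vecMulVec b (star b)) ε := by
  have hba : star b ⬝ᵥ a = 0 := by rw [star_dotProduct, hab, star_zero]
  have hP := isStarProjection_lineProj_add hab
  refine ⟨1 - (lineProj a + lineProj b), hP.one_sub.isSelfAdjoint, hP.one_sub.posSemidef,
    by simpa only [sub_sub_cancel] using hP.posSemidef, ?typeI, ?typeII⟩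
  case typeI =>
    have htr := card_sub_two_le_re_trace_one_sub_lineProj_add a b
    simp only [Fintype.card_fun, Fintype.card_fin, Nat.cast_pow, Nat.cast_ofNat] at htr
    have hscalar : (2 : ℂ)⁻¹ ^ n = ((2⁻¹ ^ n : ℝ) : ℂ) := by push_cast; rfl
    rw [smul_mul, one_mul, trace_smul, smul_eq_mul, hscalar, Complex.re_ofReal_mul]
    calc 1 - ε ≤ 2⁻¹ ^ n * (2 ^ n - 2) := by
          rw [mul_sub, ← mul_pow, inv_mul_cancel₀ two_ne_zero, one_pow, inv_pow, inv_mul_eq_div]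
          linarith
      _ ≤ _ := mul_le_mul_of_nonneg_left htr (by positivity)
  case typeII =>
    rw [add_mul, trace_add, trace_vecMulVec_star_mul, trace_vecMulVec_star_mul,
      one_sub_lineProj_add_mulVec_left hba, one_sub_lineProj_add_mulVec_right hab]
    simp

theorem typeII_error_vanishes_mixed_null_general (p : ℝ) :
    ∀ ε ∈ Set.Ioo (0 : ℝ) 1, ∀ n : ℕ, ⌈Real.logb 2 (1 / ε)⌉₊ + 1 ≤ n →
      sInf (errSet n (twirl (mpow n mmix)) (twirl (mpow n (projv (qubitR p)))) ε) = 0 := by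
  intro ε hε n hn
  rw [mmix, mpow_smul_one, twirl_smul_one, mpow_projv, twirl_vecMulVec_star]
  exact IsLeast.csInf_eq
    ⟨zero_mem_errSet (star_indicator_dotProduct_indicator_compl _ _) (two_div_two_pow_le hε.1 hn),
      fun _ hx => nonneg_of_mem_errSet hx⟩

/-- For ρ₀ = ½I and ρ₁ = |ψ⟩⟨ψ| with |ψ⟩ = √p|0⟩+√(1-p)|1⟩, p ∈ (0,1),
for any ε ∈ (0,1) and all n ≥ ⌈log₂(1/ε)⌉ + 1, the minimal type-II error probability
under ℤ₂-invariant measurements with type-I error at most ε is zero. -/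
theorem typeII_error_vanishes_mixed_null (p : ℝ) (hp : p ∈ Set.Ioo (0 : ℝ) 1) :
    ∀ ε ∈ Set.Ioo (0 : ℝ) 1, ∀ n : ℕ, ⌈Real.logb 2 (1 / ε)⌉₊ + 1 ≤ n →
      sInf (errSet n (twirl (mpow n mmix)) (twirl (mpow n (projv (qubitR p)))) ε) = 0 :=
  typeII_error_vanishes_mixed_null_general p
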